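/- arXiv:math/0212231 — 2 statements merged into one kernel-verified Lean document; each statement's English description precedes it below -/
import Mathlib

section
/- Let H₀ < 0 and γ > 0. The equation √γ · v = (2√2/3) · H₀ · (v+1)^{3/2} has exactly one solution v with -1 < v < 0. -/
/-!
With `s = √γ > 0` and `c = (2√2/3) H₀ < 0`, the map `v ↦ s v - c (v+1)^{3/2}` is strictly
increasing on `[-1, ∞)`, equals `-s < 0` at `v = -1` and `-c > 0` at `v = 0`, so it has exactly
one zero in `(-1, 0)` by the intermediate value theorem.
-/

open Real Set

section TakeoffEquation

variable {s c p : ℝ}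

theorem strictMonoOn_mul_sub_mul_rpow (hs : 0 < s) (hc : c ≤ 0) (hp : 0 ≤ p) :
    StrictMonoOn (fun v : ℝ => s * v - c * (v + 1) ^ p) (Ici (-1)) := by
  intro a ha b hb hab
  have hlin : s * a < s * b := mul_lt_mul_of_pos_left hab hs
  have hpow : (a + 1) ^ p ≤ (b + 1) ^ p :=
    rpow_le_rpow (by linarith [mem_Ici.mp ha]) (by linarith) hp
  have hneg : c * (b + 1) ^ p ≤ c * (a + 1) ^ p := mul_le_mul_of_nonpos_left hpow hc
  dsimp only
  linarith

theorem existsUnique_mul_eq_mul_rpow (hs : 0 < s) (hc : c < 0) (hp : 0 < p) :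
    ∃! v : ℝ, -1 < v ∧ v < 0 ∧ s * v = c * (v + 1) ^ p := by
  set g : ℝ → ℝ := fun v => s * v - c * (v + 1) ^ p with hg
  have hmono : StrictMonoOn g (Ici (-1)) := strictMonoOn_mul_sub_mul_rpow hs hc.le hp.le
  have hcont : ContinuousOn g (Icc (-1) 0) :=
    (continuous_const.mul continuous_id).continuousOn.sub <| continuousOn_const.mul <|
      (continuous_id.add continuous_const).continuousOn.rpow_const fun _ _ => Or.inr hp.le
  have hsign : (0 : ℝ) ∈ Ioo (g (-1)) (g 0) := by
    simp only [hg, neg_add_cancel, zero_rpow hp.ne', zero_add, one_rpow]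
    constructor <;> linarith
  obtain ⟨v, ⟨hv₁, hv₀⟩, hgv⟩ := intermediate_value_Ioo (by norm_num) hcont hsign
  refine ⟨v, ⟨hv₁, hv₀, sub_eq_zero.mp hgv⟩, ?_⟩
  rintro w ⟨hw₁, -, hw⟩
  exact hmono.injOn (mem_Ici.mpr hw₁.le) (mem_Ici.mpr hv₁.le) <| by
    rw [hgv]; exact sub_eq_zero.mpr hw

end TakeoffEquation

theorem takeoff_equation_negative_H (H₀ γ : ℝ) (hH : H₀ < 0) (hγ : 0 < γ) :
    ∃! v : ℝ, -1 < v ∧ v < 0 ∧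
      Real.sqrt γ * v = (2 * Real.sqrt 2 / 3) * H₀ * (v + 1) ^ ((3 : ℝ) / 2) := by
  have hcoef : 0 < 2 * Real.sqrt 2 / 3 := by positivity
  exact existsUnique_mul_eq_mul_rpow (Real.sqrt_pos.mpr hγ) (mul_neg_of_pos_of_neg hcoef hH)
    (by norm_num)
end

section
/- Let v₀ > -1 and u₀(ξ) = √(1+v₀) tanh(√((1+v₀)/2)ξ). Then u_in(ξ) = (1/(2(1+v₀))) · (u₀(ξ) + ξ·u₀'(ξ)) is a bounded solution of the inhomogeneous equation u'' + (1 + v₀ - 3u₀(ξ)²)u = -u₀(ξ). -/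
open Real

private lemma tanh_hasDerivAt (x : ℝ) :
    HasDerivAt Real.tanh (1 - Real.tanh x ^ 2) x := by
  have hc : Real.cosh x ≠ 0 := ne_of_gt (Real.cosh_pos x)
  have h := (Real.hasDerivAt_sinh x).div (Real.hasDerivAt_cosh x) hc
  have he : (fun y => Real.sinh y / Real.cosh y) = Real.tanh := by
    funext y; rw [Real.tanh_eq_sinh_div_cosh]
  rw [show (Real.sinh / Real.cosh) = Real.tanh from he] at h
  refine h.congr_deriv ?_
  have h1 : Real.cosh x ^ 2 - Real.sinh x ^ 2 = 1 := Real.cosh_sq_sub_sinh_sq x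
  rw [Real.tanh_eq_sinh_div_cosh]
  field_simp

private lemma abs_tanh_le_one (x : ℝ) : |Real.tanh x| ≤ 1 := by
  rw [Real.tanh_eq_sinh_div_cosh, abs_div, abs_of_pos (Real.cosh_pos x)]
  rw [div_le_one (Real.cosh_pos x)]
  have h1 : Real.cosh x ^ 2 - Real.sinh x ^ 2 = 1 := Real.cosh_sq_sub_sinh_sq x
  nlinarith [abs_nonneg (Real.sinh x), sq_abs (Real.sinh x), Real.cosh_pos x]

private lemma one_sub_tanh_sq (x : ℝ) :
    1 - Real.tanh x ^ 2 = 1 / Real.cosh x ^ 2 := by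
  have hc : Real.cosh x ≠ 0 := ne_of_gt (Real.cosh_pos x)
  have h1 : Real.cosh x ^ 2 - Real.sinh x ^ 2 = 1 := Real.cosh_sq_sub_sinh_sq x
  rw [Real.tanh_eq_sinh_div_cosh]
  field_simp
  linarith [h1]

theorem u_in_solves_inhomogeneous (v₀ : ℝ) (hv : -1 < v₀) :
    let u₀ : ℝ → ℝ := fun ξ => Real.sqrt (1 + v₀) * Real.tanh (Real.sqrt ((1 + v₀) / 2) * ξ)
    let uin : ℝ → ℝ := fun ξ => (1 / (2 * (1 + v₀))) * (u₀ ξ + ξ * deriv u₀ ξ)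
    (∀ ξ : ℝ,
      deriv (deriv uin) ξ + (1 + v₀ - 3 * u₀ ξ ^ 2) * uin ξ = -u₀ ξ) ∧
    ∃ M : ℝ, ∀ ξ : ℝ, |uin ξ| ≤ M := by
  intro u₀ uin
  have hv0 : (0:ℝ) < 1 + v₀ := by linarith
  set a : ℝ := Real.sqrt ((1 + v₀) / 2) with ha_def
  set c : ℝ := Real.sqrt (1 + v₀) with hc_def
  have ha : 0 < a := Real.sqrt_pos.mpr (by linarith)
  have hc : 0 < c := Real.sqrt_pos.mpr hv0
  have ha2 : a ^ 2 = (1 + v₀) / 2 := Real.sq_sqrt (by linarith)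
  -- derivative of u₀
  have d1 : ∀ ξ : ℝ, HasDerivAt u₀ (c * a * (1 - Real.tanh (a * ξ) ^ 2)) ξ := by
    intro ξ
    have hin : HasDerivAt (fun y : ℝ => a * y) a ξ := by
      simpa using (hasDerivAt_id ξ).const_mul a
    have := ((tanh_hasDerivAt (a * ξ)).comp ξ hin).const_mul c
    refine this.congr_deriv ?_
    ring
  have hderiv_u₀ : deriv u₀ = fun ξ => c * a * (1 - Real.tanh (a * ξ) ^ 2) :=
    funext fun ξ => (d1 ξ).deriv
  have huin : uin = fun ξ : ℝ =>
      (1 / (2 * (1 + v₀))) * (c * Real.tanh (a * ξ) + ξ * (c * a * (1 - Real.tanh (a * ξ) ^ 2))) := by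
    funext ξ
    show (1 / (2 * (1 + v₀))) * (u₀ ξ + ξ * deriv u₀ ξ) = _
    rw [hderiv_u₀]
  -- first derivative of uin
  have d2 : ∀ ξ : ℝ, HasDerivAt uin
      ((1 / (2 * (1 + v₀))) * (c * a * (1 - Real.tanh (a * ξ) ^ 2)
        + (c * a * (1 - Real.tanh (a * ξ) ^ 2)
           + ξ * (c * a * (-2 * Real.tanh (a * ξ) * ((1 - Real.tanh (a * ξ) ^ 2) * a)))))) ξ := by
    intro ξ
    rw [huin]
    have hin : HasDerivAt (fun y : ℝ => a * y) a ξ := by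
      simpa using (hasDerivAt_id ξ).const_mul a
    have ht : HasDerivAt (fun y : ℝ => Real.tanh (a * y))
        ((1 - Real.tanh (a * ξ) ^ 2) * a) ξ := (tanh_hasDerivAt (a * ξ)).comp ξ hin
    have htsq : HasDerivAt (fun y : ℝ => c * a * (1 - Real.tanh (a * y) ^ 2))
        (c * a * (-2 * Real.tanh (a * ξ) * ((1 - Real.tanh (a * ξ) ^ 2) * a))) ξ := by
      have h2 : HasDerivAt (fun y : ℝ => 1 - Real.tanh (a * y) ^ 2)
          (-(2 * Real.tanh (a * ξ) * ((1 - Real.tanh (a * ξ) ^ 2) * a))) ξ := by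
        have := (hasDerivAt_const ξ (1:ℝ)).sub (ht.pow 2)
        refine this.congr_deriv ?_
        push_cast
        ring
      have := h2.const_mul (c * a)
      refine this.congr_deriv ?_
      ring
    have hprod : HasDerivAt (fun y : ℝ => y * (c * a * (1 - Real.tanh (a * y) ^ 2)))
        (1 * (c * a * (1 - Real.tanh (a * ξ) ^ 2))
          + ξ * (c * a * (-2 * Real.tanh (a * ξ) * ((1 - Real.tanh (a * ξ) ^ 2) * a)))) ξ :=
      (hasDerivAt_id ξ).mul htsq
    have := ((ht.const_mul c).add hprod).const_mul (1 / (2 * (1 + v₀)))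
    refine this.congr_deriv ?_
    ring
  have hderiv_uin : deriv uin = fun ξ =>
      (1 / (2 * (1 + v₀))) * (c * a * (1 - Real.tanh (a * ξ) ^ 2)
        + c * a * (1 - Real.tanh (a * ξ) ^ 2)
        + ξ * (c * a * (-2 * Real.tanh (a * ξ) * ((1 - Real.tanh (a * ξ) ^ 2) * a)))) :=
    funext fun ξ => by rw [(d2 ξ).deriv]; ring
  constructor
  · intro ξ
    -- second derivative of uin at ξ
    have hin : HasDerivAt (fun y : ℝ => a * y) a ξ := by
      simpa using (hasDerivAt_id ξ).const_mul a
    have ht : HasDerivAt (fun y : ℝ => Real.tanh (a * y))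
        ((1 - Real.tanh (a * ξ) ^ 2) * a) ξ := (tanh_hasDerivAt (a * ξ)).comp ξ hin
    set t : ℝ := Real.tanh (a * ξ) with ht_def
    have hsq : HasDerivAt (fun y : ℝ => 1 - Real.tanh (a * y) ^ 2)
        (-(2 * t * ((1 - t ^ 2) * a))) ξ := by
      have := (hasDerivAt_const ξ (1:ℝ)).sub (ht.pow 2)
      refine this.congr_deriv ?_
      ring
    have hterm1 : HasDerivAt (fun y : ℝ => c * a * (1 - Real.tanh (a * y) ^ 2)
        + c * a * (1 - Real.tanh (a * y) ^ 2))
        (c * a * -(2 * t * ((1 - t ^ 2) * a)) + c * a * -(2 * t * ((1 - t ^ 2) * a))) ξ :=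
      (hsq.const_mul (c * a)).add (hsq.const_mul (c * a))
    have hterm2 : HasDerivAt
        (fun y : ℝ => y * (c * a * (-2 * Real.tanh (a * y) * ((1 - Real.tanh (a * y) ^ 2) * a))))
        (1 * (c * a * (-2 * t * ((1 - t ^ 2) * a)))
          + ξ * (c * a * ((-2 * ((1 - t ^ 2) * a)) * ((1 - t ^ 2) * a)
              + (-2 * t) * (-(2 * t * ((1 - t ^ 2) * a)) * a)))) ξ := by
      have hg : HasDerivAt (fun y : ℝ => -2 * Real.tanh (a * y)) (-2 * ((1 - t ^ 2) * a)) ξ :=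
        ht.const_mul (-2)
      have hh : HasDerivAt (fun y : ℝ => (1 - Real.tanh (a * y) ^ 2) * a)
          (-(2 * t * ((1 - t ^ 2) * a)) * a) ξ := hsq.mul_const a
      have hgh : HasDerivAt
          (fun y : ℝ => (-2 * Real.tanh (a * y)) * ((1 - Real.tanh (a * y) ^ 2) * a))
          ((-2 * ((1 - t ^ 2) * a)) * ((1 - t ^ 2) * a)
            + (-2 * t) * (-(2 * t * ((1 - t ^ 2) * a)) * a)) ξ := hg.mul hh
      exact (hasDerivAt_id ξ).mul (hgh.const_mul (c * a))
    have dd : HasDerivAt (deriv uin)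
        ((1 / (2 * (1 + v₀))) * (c * a * -(2 * t * ((1 - t ^ 2) * a))
            + c * a * -(2 * t * ((1 - t ^ 2) * a))
          + (1 * (c * a * (-2 * t * ((1 - t ^ 2) * a)))
            + ξ * (c * a * ((-2 * ((1 - t ^ 2) * a)) * ((1 - t ^ 2) * a)
              + (-2 * t) * (-(2 * t * ((1 - t ^ 2) * a)) * a)))))) ξ := by
      rw [hderiv_uin]
      exact ((hterm1.add hterm2).const_mul (1 / (2 * (1 + v₀))))
    rw [dd.deriv]
    have hu₀ : u₀ ξ = c * t := rfl
    have huinx : uin ξ = (1 / (2 * (1 + v₀))) * (c * t + ξ * (c * a * (1 - t ^ 2))) := by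
      rw [huin]
    rw [hu₀, huinx]
    have h2a : 2 * a ^ 2 = 1 + v₀ := by rw [ha2]; ring
    have hc2 : c ^ 2 = 1 + v₀ := Real.sq_sqrt (le_of_lt hv0)
    have hne : (1 + v₀) ≠ 0 := ne_of_gt hv0
    field_simp
    linear_combination ((1-t^2)*(-3*t+a*ξ*(3*t^2-1))) * h2a
      + (-3*t^2*(t+a*(1-t^2)*ξ)) * hc2
  · -- boundedness
    refine ⟨(1 / (2 * (1 + v₀))) * (3 * c), fun ξ => ?_⟩
    rw [huin]
    have hk : (0:ℝ) < 1 / (2 * (1 + v₀)) := by positivity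
    rw [abs_mul, abs_of_pos hk]
    rw [mul_le_mul_iff_right₀ hk]
    have h1 : |c * Real.tanh (a * ξ)| ≤ c := by
      rw [abs_mul, abs_of_pos hc]
      nlinarith [abs_tanh_le_one (a * ξ), hc]
    have h2 : |ξ * (c * a * (1 - Real.tanh (a * ξ) ^ 2))| ≤ 2 * c := by
      rw [one_sub_tanh_sq]
      have hcosh : Real.exp |a * ξ| / 2 ≤ Real.cosh (a * ξ) := by
        rw [Real.cosh_eq]
        rcases abs_cases (a * ξ) with ⟨h, _⟩ | ⟨h, _⟩ <;>
          rw [h] <;> nlinarith [Real.exp_pos (a * ξ), Real.exp_pos (-(a * ξ))]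
      have hcosh2 : Real.exp |a * ξ| ^ 2 / 4 ≤ Real.cosh (a * ξ) ^ 2 := by
        nlinarith [Real.exp_pos |a * ξ|]
      have hξ : |ξ| ≤ Real.exp |a * ξ| ^ 2 / (2 * a) := by
        have h3 : 2 * a * |ξ| ≤ Real.exp |a * ξ| ^ 2 := by
          have h4 : 2 * (a * |ξ|) + 1 ≤ Real.exp (2 * (a * |ξ|)) := by
            have := Real.add_one_le_exp (2 * (a * |ξ|))
            linarith
          have h5 : Real.exp (2 * (a * |ξ|)) = Real.exp |a * ξ| ^ 2 := by
            rw [abs_mul, abs_of_pos ha, ← Real.exp_nat_mul]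
            norm_num
          nlinarith [abs_nonneg ξ]
        rw [le_div_iff₀ (by positivity)]
        linarith
      calc |ξ * (c * a * (1 / Real.cosh (a * ξ) ^ 2))|
          = |ξ| * (c * a * (1 / Real.cosh (a * ξ) ^ 2)) := by
            rw [abs_mul]
            congr 1
            exact abs_of_pos (by positivity)
        _ ≤ (Real.exp |a * ξ| ^ 2 / (2 * a)) * (c * a * (4 / Real.exp |a * ξ| ^ 2)) := by
            apply mul_le_mul hξ _ (by positivity) (by positivity)
            apply mul_le_mul_of_nonneg_left _ (by positivity)
            rw [div_le_div_iff₀ (by positivity) (by positivity)]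
            nlinarith [hcosh2]
        _ = 2 * c := by
            field_simp
            ring
    calc |c * Real.tanh (a * ξ) + ξ * (c * a * (1 - Real.tanh (a * ξ) ^ 2))|
        ≤ |c * Real.tanh (a * ξ)| + |ξ * (c * a * (1 - Real.tanh (a * ξ) ^ 2))| := abs_add_le _ _
      _ ≤ c + 2 * c := add_le_add h1 h2
      _ = 3 * c := by ring
end
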